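/- arXiv:1612.04886 — 3 statements merged into one kernel-verified Lean document; each statement's English description precedes it below -/
import Mathlib

section
/- Let C, Q, b be positive integers and let y, a be integers. Assume b | QC, gcd(y, QC/b) = 1 and gcd(a, C) = 1. Then the double exponential sum ∑_{D | QC} ∑*_{x mod QC/D} e( D·x·a/C + b·y·x/(QC/D) ), where the outer sum runs over positive divisors D of QC and the inner sum runs over residue classes x modulo QC/D that are coprime to QC/D, equals QC if b = Q and y ≡ −a (mod C), and equals 0 otherwise. -/
open Finset

/-- `e(x) = exp(2πix)`. -/
noncomputable def e (x : ℚ) : ℂ := Complex.exp (2 * Real.pi * Complex.I * (x : ℂ))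


lemma e_geom (N : ℕ) (hN : 0 < N) (n : ℤ) :
    ∑ x ∈ Finset.range N, e ((x : ℚ) * (n : ℚ) / (N : ℚ)) =
      if (N : ℤ) ∣ n then (N : ℂ) else 0 := by
  have hN0 : (N : ℚ) ≠ 0 := Nat.cast_ne_zero.mpr hN.ne'
  have key : ∀ x : ℕ, e ((x : ℚ) * (n : ℚ) / (N : ℚ)) = e ((n : ℚ) / (N : ℚ)) ^ x := by
    intro x
    unfold e
    rw [← Complex.exp_nat_mul]
    congr 1
    push_cast
    ring
  simp only [key]
  by_cases h : (N : ℤ) ∣ n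
  · rw [if_pos h]
    obtain ⟨k, hk⟩ := h
    have h1 : (n : ℚ) / (N : ℚ) = (k : ℚ) := by
      rw [hk]; push_cast; field_simp
    rw [h1]
    have h2 : e (k : ℚ) = 1 := by
      unfold e
      rw [mul_comm]
      push_cast
      exact Complex.exp_int_mul_two_pi_mul_I k
    simp [h2]
  · rw [if_neg h]
    have hzne : e ((n : ℚ) / (N : ℚ)) ≠ 1 := by
      intro h1
      unfold e at h1
      rw [Complex.exp_eq_one_iff] at h1
      obtain ⟨k, hk⟩ := h1
      have hne : (2 * (Real.pi : ℂ) * Complex.I) ≠ 0 := by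
        simp [Real.pi_ne_zero, Complex.I_ne_zero]
      have h2 : (((n : ℚ) / (N : ℚ) : ℚ) : ℂ) = (k : ℂ) := by
        apply mul_left_cancel₀ hne
        rw [hk]; ring
      have h3 : (n : ℚ) / (N : ℚ) = (k : ℚ) := by exact_mod_cast h2
      have h4 : (n : ℚ) = (N : ℚ) * (k : ℚ) := by
        field_simp at h3; linarith
      exact h ⟨k, by exact_mod_cast h4⟩
    have hpow : e ((n : ℚ) / (N : ℚ)) ^ N = 1 := by
      rw [← key N]
      have : (N : ℚ) * (n : ℚ) / (N : ℚ) = (n : ℚ) := by field_simp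
      rw [this]
      unfold e
      rw [mul_comm]
      exact Complex.exp_int_mul_two_pi_mul_I n
    rw [geom_sum_eq hzne, hpow]
    simp

lemma arith (C Q b : ℕ) (hC : 0 < C) (hQ : 0 < Q) (hb : 0 < b)
    (y a : ℤ) (hbQC : b ∣ Q * C)
    (hy : Int.gcd y ((Q * C / b : ℕ) : ℤ) = 1)
    (ha : Int.gcd a (C : ℤ) = 1) :
    ((Q * C : ℕ) : ℤ) ∣ (a * Q + b * y) ↔ (b = Q ∧ y ≡ -a [ZMOD (C : ℤ)]) := by
  have hQz : (Q : ℤ) ≠ 0 := Int.natCast_ne_zero.mpr hQ.ne'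
  constructor
  · intro h
    push_cast at h
    set g := Nat.gcd Q b with hg
    have hgpos : 0 < g := Nat.gcd_pos_of_pos_left _ hQ
    have hgz : (g : ℤ) ≠ 0 := Int.natCast_ne_zero.mpr hgpos.ne'
    set Q' := Q / g with hQ'
    set b' := b / g with hb'
    have hQeq : g * Q' = Q := Nat.mul_div_cancel' (Nat.gcd_dvd_left _ _)
    have hbeq : g * b' = b := Nat.mul_div_cancel' (Nat.gcd_dvd_right _ _)
    have cop : Nat.Coprime Q' b' := Nat.coprime_div_gcd_div_gcd hgpos
    have h1 : (Q : ℤ) ∣ (b : ℤ) * y := by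
      have hQdvd : (Q : ℤ) ∣ (a * Q + b * y) := dvd_trans ⟨C, by push_cast; ring⟩ h
      have := dvd_sub hQdvd (⟨a, by ring⟩ : (Q : ℤ) ∣ a * Q)
      simpa using this
    have h2 : (Q' : ℤ) ∣ (b' : ℤ) * y := by
      have h1' : (g : ℤ) * (Q' : ℤ) ∣ (g : ℤ) * ((b' : ℤ) * y) := by
        have e1 : (g : ℤ) * (Q' : ℤ) = (Q : ℤ) := by exact_mod_cast congrArg Nat.cast hQeq
        have e2 : (g : ℤ) * (b' : ℤ) = (b : ℤ) := by exact_mod_cast congrArg Nat.cast hbeq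
        rw [e1, ← mul_assoc, e2]; exact h1
      exact (mul_dvd_mul_iff_left hgz).mp h1'
    have copZ : IsCoprime (Q' : ℤ) (b' : ℤ) := by
      rw [Int.isCoprime_iff_gcd_eq_one, Int.gcd_natCast_natCast]; exact cop
    have hQ'y : (Q' : ℤ) ∣ y := copZ.dvd_of_dvd_mul_left h2
    have hb'QC : b' ∣ Q' * C := by
      have : g * b' ∣ g * (Q' * C) := by
        rw [hbeq, ← mul_assoc, hQeq]; exact hbQC
      exact (Nat.mul_dvd_mul_iff_left hgpos).mp this
    have hb'C : b' ∣ C := (Nat.Coprime.dvd_of_dvd_mul_left (cop.symm) hb'QC)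
    have hm : Q * C / b = Q' * (C / b') := by
      rw [← hQeq, ← hbeq, mul_assoc, Nat.mul_div_mul_left _ _ hgpos,
        Nat.mul_div_assoc _ hb'C]
    have hQ'm : (Q' : ℤ) ∣ ((Q * C / b : ℕ) : ℤ) := by
      rw [hm]; push_cast; exact dvd_mul_right _ _
    have hQ'1 : Q' = 1 := by
      have := Int.dvd_gcd hQ'y hQ'm
      rw [hy] at this
      exact Nat.dvd_one.mp (by exact_mod_cast this)
    have hQdvdb : Q ∣ b := by
      rw [← hQeq, hQ'1, mul_one]; exact Nat.gcd_dvd_right _ _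
    obtain ⟨k, hk⟩ := hQdvdb
    have hkC : k ∣ C := by
      have : Q * k ∣ Q * C := hk ▸ hbQC
      exact (Nat.mul_dvd_mul_iff_left hQ).mp this
    have hba : (b : ℤ) ∣ a * (Q : ℤ) := by
      have hbd : (b : ℤ) ∣ (a * Q + b * y) := by
        refine dvd_trans ?_ h
        exact_mod_cast Int.natCast_dvd_natCast.mpr hbQC
      have := dvd_sub hbd (⟨y, rfl⟩ : (b : ℤ) ∣ b * y)
      simpa using this
    have hka : (k : ℤ) ∣ a := by
      have : (Q : ℤ) * k ∣ (Q : ℤ) * a := by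
        have e1 : (Q : ℤ) * k = (b : ℤ) := by exact_mod_cast congrArg Nat.cast hk.symm
        rw [e1, mul_comm (Q : ℤ) a]; exact hba
      exact (mul_dvd_mul_iff_left hQz).mp this
    have hk1 : k = 1 := by
      have := Int.dvd_gcd hka (Int.natCast_dvd_natCast.mpr hkC)
      rw [ha] at this
      exact Nat.dvd_one.mp (by exact_mod_cast this)
    have hbQ : b = Q := by rw [hk, hk1, mul_one]
    subst hbQ
    have hCay : (C : ℤ) ∣ (a + y) := by
      have : (b : ℤ) * C ∣ (b : ℤ) * (a + y) := by
        have e1 : a * (b:ℤ) + (b:ℤ) * y = (b:ℤ) * (a + y) := by ring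
        rw [← e1]; exact_mod_cast h
      exact (mul_dvd_mul_iff_left hQz).mp this
    refine ⟨rfl, ?_⟩
    rw [Int.modEq_iff_dvd]
    have : -a - y = -(a + y) := by ring
    rw [this]
    exact dvd_neg.mpr hCay
  · rintro ⟨rfl, hmod⟩
    have hdvd : (C : ℤ) ∣ (-a - y) := Int.ModEq.dvd hmod
    have hC2 : (C : ℤ) ∣ (a + y) := by
      have := dvd_neg.mpr hdvd
      simpa [neg_sub, sub_neg_eq_add, add_comm] using this
    obtain ⟨k, hk⟩ := hC2
    refine ⟨k, ?_⟩
    push_cast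
    have e1 : a * (b : ℤ) + (b : ℤ) * y = (b : ℤ) * (a + y) := by ring
    rw [e1, hk]; ring

lemma regroup (N : ℕ) (hN : 0 < N) (f : ℕ → ℂ) :
    (∑ D ∈ N.divisors,
      ∑ x ∈ (Finset.range (N / D)).filter (fun t => Nat.Coprime t (N / D)), f (x * D)) =
    ∑ t ∈ Finset.range N, f t := by
  rw [Finset.sum_sigma']
  refine Finset.sum_nbij' (fun p => p.2 * p.1) (fun t => ⟨Nat.gcd t N, t / Nat.gcd t N⟩)
    ?_ ?_ ?_ ?_ ?_
  · rintro ⟨D, x⟩ hp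
    rw [Finset.mem_sigma] at hp
    obtain ⟨hD, hx⟩ := hp
    rw [Nat.mem_divisors] at hD
    rw [Finset.mem_filter, Finset.mem_range] at hx
    have hD0 : 0 < D := Nat.pos_of_dvd_of_pos hD.1 hN
    rw [Finset.mem_range]
    calc x * D < (N / D) * D := (Nat.mul_lt_mul_right hD0).mpr hx.1
      _ = N := Nat.div_mul_cancel hD.1
  · intro t ht
    rw [Finset.mem_range] at ht
    have hgpos : 0 < Nat.gcd t N := Nat.gcd_pos_of_pos_right _ hN
    rw [Finset.mem_sigma, Nat.mem_divisors, Finset.mem_filter, Finset.mem_range]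
    exact ⟨⟨Nat.gcd_dvd_right _ _, hN.ne'⟩,
      Nat.div_lt_div_of_lt_of_dvd (Nat.gcd_dvd_right _ _) ht,
      Nat.coprime_div_gcd_div_gcd hgpos⟩
  · rintro ⟨D, x⟩ hp
    rw [Finset.mem_sigma] at hp
    obtain ⟨hD, hx⟩ := hp
    rw [Nat.mem_divisors] at hD
    rw [Finset.mem_filter, Finset.mem_range] at hx
    have hD0 : 0 < D := Nat.pos_of_dvd_of_pos hD.1 hN
    have hg : Nat.gcd (x * D) N = D := by
      conv_lhs => rw [show N = (N / D) * D from (Nat.div_mul_cancel hD.1).symm]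
      rw [Nat.gcd_mul_right, hx.2, one_mul]
    have hdiv : x * D / D = x := Nat.mul_div_cancel _ hD0
    simp only [hg, hdiv]
  · intro t ht
    exact Nat.div_mul_cancel (Nat.gcd_dvd_left _ _)
  · intro p hp
    rfl



set_option maxHeartbeats 1000000 in
/-- **Lemma 3.2 (Miller–Zhou).**  For positive integers `C, Q, b` and integers `y, a` with
`b ∣ QC`, `gcd(y, QC/b) = 1` and `gcd(a, C) = 1`, the sum
`∑_{D ∣ QC} ∑*_{x mod QC/D} e(Dxa/C + byx/(QC/D))` equals `QC` if `b = Q` and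
`y ≡ -a (mod C)`, and `0` otherwise. -/
theorem balanced_voronoi_cancellation_lemma
    (C Q b : ℕ) (hC : 0 < C) (hQ : 0 < Q) (hb : 0 < b)
    (y a : ℤ) (hbQC : b ∣ Q * C)
    (hy : Int.gcd y ((Q * C / b : ℕ) : ℤ) = 1)
    (ha : Int.gcd a (C : ℤ) = 1) :
    (∑ D ∈ (Q * C).divisors,
        ∑ x ∈ (Finset.range (Q * C / D)).filter (fun t => Nat.Coprime t (Q * C / D)),
          e (((D : ℚ) * (x : ℚ) * (a : ℚ)) / (C : ℚ)
              + ((b : ℚ) * (y : ℚ) * (x : ℚ)) / ((Q * C / D : ℕ) : ℚ))) =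
      if b = Q ∧ y ≡ -a [ZMOD (C : ℤ)] then ((Q * C : ℕ) : ℂ) else 0 := by
  have hN : 0 < Q * C := Nat.mul_pos hQ hC
  have hC0 : (C : ℚ) ≠ 0 := Nat.cast_ne_zero.mpr hC.ne'
  have hN0 : ((Q * C : ℕ) : ℚ) ≠ 0 := Nat.cast_ne_zero.mpr hN.ne'
  set n : ℤ := a * Q + b * y with hn
  calc (∑ D ∈ (Q * C).divisors,
        ∑ x ∈ (Finset.range (Q * C / D)).filter (fun t => Nat.Coprime t (Q * C / D)),
          e (((D : ℚ) * (x : ℚ) * (a : ℚ)) / (C : ℚ)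
              + ((b : ℚ) * (y : ℚ) * (x : ℚ)) / ((Q * C / D : ℕ) : ℚ)))
      = ∑ D ∈ (Q * C).divisors,
          ∑ x ∈ (Finset.range (Q * C / D)).filter (fun t => Nat.Coprime t (Q * C / D)),
            (fun t : ℕ => e ((t : ℚ) * (n : ℚ) / ((Q * C : ℕ) : ℚ))) (x * D) := by
        refine Finset.sum_congr rfl fun D hD => Finset.sum_congr rfl fun x hx => ?_
        rw [Nat.mem_divisors] at hD
        have hDd : D ∣ Q * C := hD.1
        have hDpos : 0 < D := Nat.pos_of_dvd_of_pos hDd hN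
        have hD0 : (D : ℚ) ≠ 0 := Nat.cast_ne_zero.mpr hDpos.ne'
        congr 1
        rw [Nat.cast_div hDd hD0, hn]
        push_cast
        field_simp
    _ = ∑ t ∈ Finset.range (Q * C),
          e ((t : ℚ) * (n : ℚ) / ((Q * C : ℕ) : ℚ)) :=
        regroup (Q * C) hN (fun t : ℕ => e ((t : ℚ) * (n : ℚ) / ((Q * C : ℕ) : ℚ)))
    _ = if ((Q * C : ℕ) : ℤ) ∣ n then ((Q * C : ℕ) : ℂ) else 0 := e_geom (Q * C) hN n
    _ = if b = Q ∧ y ≡ -a [ZMOD (C : ℤ)] then ((Q * C : ℕ) : ℂ) else 0 :=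
        if_congr (arith C Q b hC hQ hb y a hbQC hy ha) rfl rfl
end

section
/- Let C, Q, b be positive integers and let y, a be integers with b | QC, gcd(a, C) = 1 and gcd(y, QC/b) = 1. Then QC divides Qa + by if and only if b = Q and C divides a + y. -/
/-!
Since `Q ∣ QC = b · (QC/b)` and `Q ∣ by`, coprimality of `y` and `QC/b` gives `Q ∣ b`.
Writing `b = Qk` and cancelling `Q` yields `k ∣ C` and `C ∣ a + ky`, so `k` divides both `a`
and `C`, and `gcd(a, C) = 1` forces `k = 1`.
-/

theorem dvd_of_dvd_mul_of_dvd_mul_of_isCoprime {R : Type*} [CommSemiring R] {q b y d : R}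
    (hyd : IsCoprime y d) (hy : q ∣ b * y) (hd : q ∣ b * d) : q ∣ b := by
  obtain ⟨u, v, huv⟩ := hyd
  rw [← mul_one b, ← huv, mul_add, mul_left_comm, mul_left_comm b v]
  exact dvd_add (dvd_mul_of_dvd_right hy u) (dvd_mul_of_dvd_right hd v)

theorem isUnit_of_dvd_of_dvd_add_mul {R : Type*} [CommRing R] {a c k y : R}
    (hac : IsCoprime a c) (hkc : k ∣ c) (h : c ∣ a + k * y) : IsUnit k :=
  hac.isUnit_of_dvd' ((dvd_add_left (dvd_mul_right k y)).mp (hkc.trans h)) hkc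

theorem divisibility_criterion_general
    (C Q b : ℕ) (hQ : 0 < Q)
    (y a : ℤ) (hbQC : b ∣ Q * C)
    (ha : Int.gcd a (C : ℤ) = 1)
    (hy : Int.gcd y ((Q * C / b : ℕ) : ℤ) = 1) :
    ((Q : ℤ) * (C : ℤ)) ∣ ((Q : ℤ) * a + (b : ℤ) * y) ↔ (b = Q ∧ (C : ℤ) ∣ (a + y)) := by
  have hQ0 : (Q : ℤ) ≠ 0 := by exact_mod_cast hQ.ne'
  constructor
  · intro h
    have hQC : (Q : ℤ) * C = b * ((Q * C / b : ℕ) : ℤ) := by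
      exact_mod_cast (Nat.mul_div_cancel' hbQC).symm
    have hQby : (Q : ℤ) ∣ b * y :=
      (dvd_add_right (dvd_mul_right _ a)).mp ((dvd_mul_right _ _).trans h)
    have hQb : (Q : ℤ) ∣ b := dvd_of_dvd_mul_of_dvd_mul_of_isCoprime
      (Int.isCoprime_iff_gcd_eq_one.mpr hy) hQby (hQC ▸ dvd_mul_right _ _)
    obtain ⟨k, rfl⟩ : Q ∣ b := Int.natCast_dvd_natCast.mp hQb
    push_cast at h ⊢
    have hkC : (k : ℤ) ∣ C := (mul_dvd_mul_iff_left hQ0).mp (by exact_mod_cast hbQC)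
    have hC : (C : ℤ) ∣ a + k * y :=
      (mul_dvd_mul_iff_left hQ0).mp (by rwa [mul_add, ← mul_assoc])
    have hk : k = 1 := Nat.isUnit_iff.mp <| Int.ofNat_isUnit.mp <|
      isUnit_of_dvd_of_dvd_add_mul (Int.isCoprime_iff_gcd_eq_one.mpr ha) hkC hC
    subst hk
    simpa using hC
  · rintro ⟨rfl, hC⟩
    rw [← mul_add]
    exact mul_dvd_mul_left _ hC

/-- For positive integers `C, Q, b` and integers `y, a` with `b ∣ QC`, `gcd(a, C) = 1`
and `gcd(y, QC/b) = 1`, one has `QC ∣ Qa + by` if and only if `b = Q` and `C ∣ a + y`. -/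
theorem divisibility_criterion
    (C Q b : ℕ) (hC : 0 < C) (hQ : 0 < Q) (hb : 0 < b)
    (y a : ℤ) (hbQC : b ∣ Q * C)
    (ha : Int.gcd a (C : ℤ) = 1)
    (hy : Int.gcd y ((Q * C / b : ℕ) : ℤ) = 1) :
    ((Q : ℤ) * (C : ℤ)) ∣ ((Q : ℤ) * a + (b : ℤ) * y) ↔ (b = Q ∧ (C : ℤ) ∣ (a + y)) :=
  divisibility_criterion_general C Q b hQ y a hbQC ha hy
end

section
/- Let L ≥ 0, let c, Q, b be positive integers, let a, n be integers with gcd(a, c) = 1, and let ā denote the multiplicative inverse of a modulo c. Let q⃗ = (q₁,…,q_L) and d⃗ = (d₁,…,d_L) be L-tuples of positive integers. Assume b | Qc and assume the divisibility conditions d₁ | q₁·(Qc/b), d₂ | q₁q₂·(Qc/b)/d₁, …, d_L | q₁⋯q_L·(Qc/b)/(d₁⋯d_{L−1}) hold. Then ∑_{D | Qc} ∑*_{x mod Qc/D} e( D·x·ā / c ) · Kl_{L+1}( x, n, Qc/D ; (D, q₁,…,q_L), (b, d₁,…,d_L) ) equals Qc · Kl_L( −a, n, c ; q⃗, d⃗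 ) if b = Q, and equals 0 otherwise; here the outer sum runs over positive divisors D of Qc and the inner sum over residue classes x modulo Qc/D coprime to Qc/D. -/
/-!
Peeling off the first summation variable of `Kl_{L+1}` rewrites the left side as
`∑*_{y mod Qc/b} Kl_L(ȳ, n, Qc/b; q⃗, d⃗) · ∑_{D ∣ Qc} ∑*_{x mod Qc/D} e(x(Qā + by)/(Qc/D))`.
As `(D, x)` runs over the pairs in the inner sum, `Dx` runs once over all residues modulo `Qc`,
so the inner sum is the complete sum `∑_{t mod Qc} e(t(Qā + by)/Qc)`: it is `Qc` if
`Qc ∣ Qā + by` and `0` otherwise. Since `ā` is coprime to `c` and `y` to `Qc/b`, that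
divisibility forces `b = Q`, and then it selects the single residue `y ≡ -ā (mod c)`,
whose inverse modulo `c` is `-a`.
-/

open Finset

/-- The multiplicative inverse of `x` modulo `m`, realized as a natural number in `[0, m)`. -/
def minv (m x : ℕ) : ℕ := ZMod.val ((x : ZMod m)⁻¹)

/-- The modulus `M_k = q₁⋯q_k·c/(d₁⋯d_k)` (1-indexed with `M_0 = c`). -/
def Kmod {N : ℕ} (c : ℕ) (q d : Fin N → ℕ) (k : ℕ) : ℕ :=
  ((∏ j ∈ Finset.univ.filter (fun j : Fin N => (j : ℕ) < k), q j) * c) /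
    (∏ j ∈ Finset.univ.filter (fun j : Fin N => (j : ℕ) < k), d j)

/-- `xbar c q d a x k` is `a` when `k = 0` and is otherwise the multiplicative inverse
`x̄_{k-1}` of the variable `x_{k-1}` modulo its modulus `M_k = Kmod c q d k`
(here `x : Fin N → ℕ` records the summation variables `x₁, …, x_N` with 0-based indexing). -/
def xbar {N : ℕ} (c : ℕ) (q d : Fin N → ℕ) (a : ℤ) (x : Fin N → ℕ) (k : ℕ) : ℤ :=
  if h : k - 1 < N ∧ k ≠ 0 then (minv (Kmod c q d k) (x ⟨k - 1, h.1⟩) : ℤ) else a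

/-- The hyper-Kloosterman sum
`Kl_N(a,n,c;q⃗,d⃗) = ∑*_{x₁ mod q₁c/d₁} ⋯ ∑*_{x_N mod q₁⋯q_N c/(d₁⋯d_N)}
  e(d₁x₁a/c + d₂x₂x̄₁/(q₁c/d₁) + ⋯ + n x̄_N/(q₁⋯q_N c/(d₁⋯d_N)))`,
where each `x_i` runs over residues coprime to its modulus and `x̄_i` is the
multiplicative inverse of `x_i` modulo `q₁⋯q_i c/(d₁⋯d_i)`.
For `N = 0` this is `e(an/c)`. -/
noncomputable def Kl {N : ℕ} (a n : ℤ) (c : ℕ) (q d : Fin N → ℕ) : ℂ :=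
  ∑ x ∈ Fintype.piFinset (fun i : Fin N =>
      (Finset.range (Kmod c q d ((i : ℕ) + 1))).filter
        (fun t => Nat.Coprime t (Kmod c q d ((i : ℕ) + 1)))),
    e ((∑ i : Fin N,
          ((d i : ℚ) * (x i : ℚ) * ((xbar c q d a x (i : ℕ) : ℤ) : ℚ)) /
            ((Kmod c q d (i : ℕ) : ℕ) : ℚ))
        + ((n : ℚ) * ((xbar c q d a x N : ℤ) : ℚ)) / ((Kmod c q d N : ℕ) : ℚ))

lemma e_add (x y : ℚ) : e (x + y) = e x * e y := by
  simp only [e, ← Complex.exp_add]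
  push_cast
  ring_nf

lemma e_intCast (k : ℤ) : e k = 1 := by
  rw [e, ← Complex.exp_int_mul_two_pi_mul_I k]
  push_cast
  ring_nf

lemma e_add_intCast (x : ℚ) (k : ℤ) : e (x + k) = e x := by
  rw [e_add, e_intCast, mul_one]

lemma e_pow (x : ℚ) (m : ℕ) : e x ^ m = e (m * x) := by
  simp only [e, ← Complex.exp_nat_mul]
  push_cast
  ring_nf

lemma e_div_eq_one_iff {M : ℕ} (hM : M ≠ 0) (t : ℤ) : e (t / M) = 1 ↔ (M : ℤ) ∣ t := by
  have h2πi : 2 * (Real.pi : ℂ) * Complex.I ≠ 0 := by simp [Real.pi_ne_zero]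
  rw [e, Complex.exp_eq_one_iff]
  constructor
  · rintro ⟨k, hk⟩
    refine ⟨k, ?_⟩
    have hk' : ((t / M : ℚ) : ℂ) = k := mul_left_cancel₀ h2πi (by rw [hk]; ring)
    have : (t : ℚ) / M = k := by exact_mod_cast hk'
    rw [div_eq_iff (Nat.cast_ne_zero.mpr hM), mul_comm] at this
    exact_mod_cast this
  · rintro ⟨k, rfl⟩
    exact ⟨k, by push_cast; field_simp⟩

lemma sum_range_e_mul_div {M : ℕ} (hM : M ≠ 0) (t : ℤ) :
    ∑ y ∈ range M, e (y * t / M) = if (M : ℤ) ∣ t then (M : ℂ) else 0 := by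
  have hpow (y : ℕ) : e (y * t / M) = e (t / M) ^ y := by rw [e_pow]; ring_nf
  simp_rw [hpow]
  split_ifs with h
  · simp [(e_div_eq_one_iff hM t).mpr h]
  · have hM_pow : e (t / M) ^ M = 1 := by
      rw [e_pow, mul_div_cancel₀ _ (by exact_mod_cast hM), e_intCast]
    rw [geom_sum_eq (mt (e_div_eq_one_iff hM t).mp h), hM_pow, sub_self, zero_div]

/-- Every `y < M` is uniquely `D * x` with `D = gcd(y, M)` and `x` a unit modulo `M / D`. -/
lemma sum_range_eq_sum_divisors_sum_coprime {β : Type*} [AddCommMonoid β] (M : ℕ) (f : ℕ → β) :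
    ∑ y ∈ range M, f y =
      ∑ D ∈ M.divisors, ∑ x ∈ (range (M / D)).filter (fun t => t.Coprime (M / D)), f (D * x) := by
  rcases Nat.eq_zero_or_pos M with rfl | hM
  · simp
  rw [sum_sigma']
  refine sum_nbij' (fun y => ⟨y.gcd M, y / y.gcd M⟩) (fun p => p.1 * p.2) ?_ ?_ ?_ ?_ ?_
  · intro y hy
    simp only [mem_range] at hy
    simp only [mem_sigma, Nat.mem_divisors, mem_filter, mem_range]
    exact ⟨⟨Nat.gcd_dvd_right y M, hM.ne'⟩,
      Nat.div_lt_div_of_lt_of_dvd (Nat.gcd_dvd_right y M) hy,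
      Nat.coprime_div_gcd_div_gcd (Nat.gcd_pos_of_pos_right y hM)⟩
  · rintro ⟨D, x⟩ hp
    simp only [mem_sigma, Nat.mem_divisors, mem_filter, mem_range] at hp ⊢
    obtain ⟨⟨hD, -⟩, hx, -⟩ := hp
    calc D * x < D * (M / D) := by gcongr; exact Nat.pos_of_dvd_of_pos hD hM
      _ = M := Nat.mul_div_cancel' hD
  · intro y _
    exact Nat.mul_div_cancel' (Nat.gcd_dvd_left y M)
  · rintro ⟨D, x⟩ hp
    simp only [mem_sigma, Nat.mem_divisors, mem_filter, mem_range] at hp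
    obtain ⟨⟨hD, -⟩, -, hcop⟩ := hp
    have hgcd : (D * x).gcd M = D := by
      conv_lhs => rw [← Nat.mul_div_cancel' hD, Nat.gcd_mul_left, hcop.gcd_eq_one, mul_one]
    simp only [hgcd, Nat.mul_div_cancel_left _ (Nat.pos_of_dvd_of_pos hD hM)]
  · intro y _
    simp only [Nat.mul_div_cancel' (Nat.gcd_dvd_left y M)]

lemma sum_divisors_sum_coprime_e {M : ℕ} (hM : M ≠ 0) (t : ℤ) :
    ∑ D ∈ M.divisors, ∑ x ∈ (range (M / D)).filter (fun t => t.Coprime (M / D)),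
        e (x * t / (M / D : ℕ)) = if (M : ℤ) ∣ t then (M : ℂ) else 0 := by
  rw [← sum_range_e_mul_div hM, sum_range_eq_sum_divisors_sum_coprime]
  refine sum_congr rfl fun D hD => sum_congr rfl fun x _ => ?_
  have hD0 : (D : ℚ) ≠ 0 := by exact_mod_cast (Nat.pos_of_mem_divisors hD).ne'
  rw [Nat.cast_div (Nat.dvd_of_mem_divisors hD) hD0]
  push_cast
  field_simp

lemma Fintype.sum_piFinset_succ {α β : Type*} [AddCommMonoid β] {N : ℕ}
    (s : Fin (N + 1) → Finset α) (f : (Fin (N + 1) → α) → β) :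
    ∑ x ∈ Fintype.piFinset s, f x =
      ∑ x₀ ∈ s 0, ∑ z ∈ Fintype.piFinset (fun i => s i.succ), f (Fin.cons x₀ z) := by
  rw [← sum_product']
  refine sum_nbij' (fun x => (x 0, Fin.tail x)) (fun p => Fin.cons p.1 p.2) ?_ ?_ ?_ ?_ ?_ <;>
    intro x hx
  · simpa [Fin.forall_fin_succ, Fin.tail] using hx
  · simpa [Fin.forall_fin_succ] using hx
  · exact Fin.cons_self_tail x
  · simp
  · simp

lemma Kmod_zero {N : ℕ} (c : ℕ) (q d : Fin N → ℕ) : Kmod c q d 0 = c := by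
  simp [Kmod]

lemma prod_filter_val_lt_succ_cons {N : ℕ} (v : ℕ) (f : Fin N → ℕ) (k : ℕ) :
    ∏ j ∈ univ.filter (fun j : Fin (N + 1) => (j : ℕ) < k + 1), (Fin.cons v f : Fin (N + 1) → ℕ) j =
      v * ∏ j ∈ univ.filter (fun j : Fin N => (j : ℕ) < k), f j := by
  rw [prod_filter, prod_filter, Fin.prod_univ_succ]
  simp

lemma Kmod_cons_succ {N : ℕ} {c q₀ d₀ : ℕ} (q d : Fin N → ℕ) (h : d₀ ∣ q₀ * c) (k : ℕ) :
    Kmod c (Fin.cons q₀ q) (Fin.cons d₀ d) (k + 1) = Kmod (q₀ * c / d₀) q d k := by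
  rw [Kmod, Kmod, prod_filter_val_lt_succ_cons, prod_filter_val_lt_succ_cons,
    ← Nat.mul_div_assoc _ h, Nat.div_div_eq_div_mul]
  congr 1
  ring

lemma xbar_zero {N : ℕ} (c : ℕ) (q d : Fin N → ℕ) (a : ℤ) (x : Fin N → ℕ) :
    xbar c q d a x 0 = a := by
  simp [xbar]

lemma xbar_succ_of_lt {N : ℕ} (c : ℕ) (q d : Fin N → ℕ) (a : ℤ) (x : Fin N → ℕ) {k : ℕ}
    (hk : k < N) : xbar c q d a x (k + 1) = minv (Kmod c q d (k + 1)) (x ⟨k, hk⟩) := by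
  simp [xbar, hk]

lemma xbar_cons_succ {N : ℕ} {c q₀ d₀ : ℕ} (q d : Fin N → ℕ) (h : d₀ ∣ q₀ * c) (a : ℤ)
    (x₀ : ℕ) (x : Fin N → ℕ) {k : ℕ} (hk : k ≤ N) :
    xbar c (Fin.cons q₀ q) (Fin.cons d₀ d) a (Fin.cons x₀ x) (k + 1) =
      xbar (q₀ * c / d₀) q d (minv (q₀ * c / d₀) x₀) x k := by
  rcases k with _ | k
  · simp [xbar, Kmod_cons_succ q d h, Kmod_zero]
  · simp [xbar, Kmod_cons_succ q d h, Nat.lt_succ_iff.mpr hk, Nat.lt_of_succ_le hk]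
    rfl

theorem Kl_cons {N : ℕ} (a n : ℤ) {c q₀ d₀ : ℕ} (q d : Fin N → ℕ) (h : d₀ ∣ q₀ * c) :
    Kl a n c (Fin.cons q₀ q) (Fin.cons d₀ d) =
      ∑ x₀ ∈ (range (q₀ * c / d₀)).filter (fun t => t.Coprime (q₀ * c / d₀)),
        e (d₀ * x₀ * a / c) * Kl (minv (q₀ * c / d₀) x₀ : ℤ) n (q₀ * c / d₀) q d := by
  have hmod := Kmod_cons_succ q d h
  rw [Kl, Fintype.sum_piFinset_succ]
  simp only [Fin.val_zero, zero_add, Fin.val_succ, hmod, Kmod_zero]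
  refine sum_congr rfl fun x₀ _ => ?_
  rw [Kl, mul_sum]
  refine sum_congr rfl fun x _ => ?_
  rw [← e_add, Fin.sum_univ_succ]
  simp only [Fin.cons_zero, Fin.cons_succ, Fin.val_zero, Fin.val_succ, xbar_zero, Kmod_zero, hmod,
    xbar_cons_succ q d h, Fin.is_le', le_refl]
  ring_nf

theorem Kl_eq_of_modEq {N : ℕ} {a₁ a₂ : ℤ} (n : ℤ) {c : ℕ} (q d : Fin N → ℕ)
    (h : a₁ ≡ a₂ [ZMOD c]) : Kl a₁ n c q d = Kl a₂ n c q d := by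
  rcases Nat.eq_zero_or_pos c with rfl | hc
  · rw [Nat.cast_zero, Int.modEq_zero_iff] at h
    rw [h]
  obtain ⟨s, hs⟩ := h.symm.dvd
  have ha₁ : (a₁ : ℚ) = a₂ + c * s := by rw [← sub_eq_iff_eq_add']; exact_mod_cast hs
  have hshift (A : ℚ) : A * (a₂ + c * s) / c = A * a₂ / c + A * s := by field_simp
  refine sum_congr rfl fun x _ => ?_
  cases N with
  | zero =>
    conv_rhs => rw [← e_add_intCast _ (n * s)]
    simp only [univ_eq_empty, sum_empty, xbar_zero, Kmod_zero, ha₁]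
    congr 1
    push_cast
    rw [hshift]
    ring
  | succ N =>
    conv_rhs => rw [← e_add_intCast _ (d 0 * x 0 * s)]
    simp only [Fin.sum_univ_succ, Fin.val_zero, Fin.val_succ, xbar_zero, Kmod_zero, ha₁,
      xbar_succ_of_lt, Nat.lt_succ_iff, Fin.is_le', le_refl]
    congr 1
    push_cast
    rw [hshift]
    ring

theorem sum_divisors_e_mul_Kl_cons {N : ℕ} {Q c b : ℕ} (hQc : Q * c ≠ 0) (hbQc : b ∣ Q * c)
    (abar n : ℤ) (q d : Fin N → ℕ) :
    ∑ D ∈ (Q * c).divisors,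
        ∑ x ∈ (range (Q * c / D)).filter (fun t => t.Coprime (Q * c / D)),
          e (D * x * abar / c) * Kl (x : ℤ) n (Q * c / D) (Fin.cons D q) (Fin.cons b d) =
      ∑ y ∈ (range (Q * c / b)).filter (fun t => t.Coprime (Q * c / b)),
        Kl (minv (Q * c / b) y : ℤ) n (Q * c / b) q d *
          if ((Q * c : ℕ) : ℤ) ∣ Q * abar + b * y then ((Q * c : ℕ) : ℂ) else 0 := by
  have hQ : (Q : ℚ) ≠ 0 := by exact_mod_cast left_ne_zero_of_mul hQc
  have hc : (c : ℚ) ≠ 0 := by exact_mod_cast right_ne_zero_of_mul hQc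
  calc _ = ∑ D ∈ (Q * c).divisors,
        ∑ x ∈ (range (Q * c / D)).filter (fun t => t.Coprime (Q * c / D)),
          ∑ y ∈ (range (Q * c / b)).filter (fun t => t.Coprime (Q * c / b)),
            Kl (minv (Q * c / b) y : ℤ) n (Q * c / b) q d *
              e (x * (Q * abar + b * y : ℤ) / (Q * c / D : ℕ)) := by
        refine sum_congr rfl fun D hD => sum_congr rfl fun x _ => ?_
        have hD := Nat.dvd_of_mem_divisors hD
        have hD0 : (D : ℚ) ≠ 0 := by exact_mod_cast ne_zero_of_dvd_ne_zero hQc hD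
        rw [Kl_cons _ _ _ _ (by rwa [Nat.mul_div_cancel' hD]), Nat.mul_div_cancel' hD, mul_sum]
        refine sum_congr rfl fun y _ => ?_
        rw [← mul_assoc, ← e_add, mul_comm, Nat.cast_div hD hD0]
        congr 2
        push_cast
        field_simp
    _ = ∑ y ∈ (range (Q * c / b)).filter (fun t => t.Coprime (Q * c / b)),
          Kl (minv (Q * c / b) y : ℤ) n (Q * c / b) q d *
            ∑ D ∈ (Q * c).divisors,
              ∑ x ∈ (range (Q * c / D)).filter (fun t => t.Coprime (Q * c / D)),
                e (x * (Q * abar + b * y : ℤ) / (Q * c / D : ℕ)) := by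
        simp_rw [mul_sum]
        rw [sum_comm]
        exact sum_congr rfl fun D _ => sum_comm
    _ = _ := by simp_rw [sum_divisors_sum_coprime_e hQc]

lemma eq_of_mul_dvd_mul_add {Q c b y : ℕ} {abar : ℤ} (hcop : IsCoprime abar c)
    (hbQc : b ∣ Q * c) (hy : y.Coprime (Q * c / b))
    (h : ((Q * c : ℕ) : ℤ) ∣ Q * abar + b * y) : b = Q := by
  obtain ⟨u, v, huv⟩ := hcop
  have hbQc' : (b : ℤ) ∣ Q * c := by exact_mod_cast hbQc
  have h' : (Q * c : ℤ) ∣ Q * abar + b * y := by exact_mod_cast h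
  have hbQabar : (b : ℤ) ∣ Q * abar := (dvd_add_left (dvd_mul_right _ _)).mp (hbQc'.trans h')
  -- `b ∣ gcd(Q * abar, Q * c) = Q`
  have hbQ : b ∣ Q := by
    have hQ : (Q : ℤ) = u * (Q * abar) + v * (Q * c) := by linear_combination (-(Q : ℤ)) * huv
    exact Int.natCast_dvd_natCast.mp
      (hQ ▸ dvd_add (dvd_mul_of_dvd_right hbQabar u) (dvd_mul_of_dvd_right hbQc' v))
  obtain ⟨m, rfl⟩ := hbQ
  rcases Nat.eq_zero_or_pos b with rfl | hb
  · simp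
  have hmc : (m * c : ℤ) ∣ m * abar + y := by
    refine (mul_dvd_mul_iff_left (Int.natCast_ne_zero.mpr hb.ne')).mp ?_
    rw [show (b : ℤ) * (m * c) = (b * m : ℕ) * c by push_cast; ring,
      show (b : ℤ) * (m * abar + y) = (b * m : ℕ) * abar + b * y by push_cast; ring]
    exact h'
  have hm_y : m ∣ y := by
    have : (m : ℤ) ∣ y := (dvd_add_right (dvd_mul_right _ _)).mp ((dvd_mul_right _ _).trans hmc)
    exact_mod_cast this
  rw [mul_assoc, Nat.mul_div_cancel_left _ hb] at hy
  rw [(hy.coprime_dvd_right (dvd_mul_right m c)).symm.eq_one_of_dvd hm_y, mul_one]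

lemma sum_coprime_ite_dvd_add {c : ℕ} [NeZero c] {abar : ℤ} (hcop : IsCoprime abar c)
    (g : ℕ → ℂ) :
    ∑ y ∈ (range c).filter (fun t => t.Coprime c), (if (c : ℤ) ∣ abar + y then g y else 0) =
      g (-abar : ZMod c).val := by
  have hdvd_iff : ∀ y < c, (c : ℤ) ∣ abar + y ↔ y = (-abar : ZMod c).val := by
    intro y hy
    rw [← ZMod.intCast_zmod_eq_zero_iff_dvd]
    push_cast
    constructor
    · intro h
      rw [← ZMod.val_natCast_of_lt hy]
      congr 1
      linear_combination h
    · rintro rfl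
      simp
  have hV : (-abar : ZMod c).val ∈ (range c).filter (fun t => t.Coprime c) := by
    obtain ⟨u, v, huv⟩ := hcop
    have hunit : ((-abar : ZMod c).val : ZMod c) * (-u) = 1 := by
      have := congrArg (Int.cast : ℤ → ZMod c) huv
      push_cast at this
      rw [ZMod.natCast_zmod_val, ZMod.natCast_self] at *
      linear_combination this
    exact mem_filter.mpr ⟨mem_range.mpr (ZMod.val_lt _),
      (ZMod.isUnit_iff_coprime _ c).mp (IsUnit.of_mul_eq_one _ hunit)⟩
  rw [sum_eq_single_of_mem _ hV fun y hy hne =>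
      if_neg ((hdvd_iff y (mem_range.mp (mem_filter.mp hy).1)).not.mpr hne),
    if_pos ((hdvd_iff _ (ZMod.val_lt _)).mpr rfl)]

lemma minv_val_neg_modEq {c : ℕ} [NeZero c] {a abar : ℤ} (habar : a * abar ≡ 1 [ZMOD c]) :
    (minv c (-abar : ZMod c).val : ℤ) ≡ -a [ZMOD c] := by
  rw [← ZMod.intCast_eq_intCast_iff]
  have h := (ZMod.intCast_eq_intCast_iff _ _ _).mpr habar
  push_cast at h ⊢
  rw [minv, ZMod.natCast_zmod_val, ZMod.natCast_zmod_val]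
  exact ZMod.inv_eq_of_mul_eq_one _ _ _ (by linear_combination h)

theorem hyperKloosterman_divisor_sum_collapse_general
    (L : ℕ) (c Q b : ℕ)
    (a n : ℤ)
    (abar : ℤ) (habar : a * abar ≡ 1 [ZMOD (c : ℤ)])
    (q d : Fin L → ℕ)
    (hbQc : b ∣ Q * c) :
    (∑ D ∈ (Q * c).divisors,
        ∑ x ∈ (Finset.range (Q * c / D)).filter (fun t => Nat.Coprime t (Q * c / D)),
          e (((D : ℚ) * (x : ℚ) * (abar : ℚ)) / (c : ℚ)) *
            Kl ((x : ℕ) : ℤ) n (Q * c / D) (Fin.cons D q) (Fin.cons b d)) =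
      if b = Q then ((Q * c : ℕ) : ℂ) * Kl (-a) n c q d else 0 := by
  rcases eq_or_ne (Q * c) 0 with hQc | hQc
  · simp only [hQc, Nat.divisors_zero, sum_empty, Nat.cast_zero, zero_mul, ite_self]
  have hcop : IsCoprime abar c := by
    obtain ⟨k, hk⟩ := habar.dvd
    exact ⟨a, k, by linear_combination -hk⟩
  rw [sum_divisors_e_mul_Kl_cons hQc hbQc]
  split_ifs with hbQ
  · subst hbQ
    have : NeZero c := ⟨right_ne_zero_of_mul hQc⟩
    have hb : (b : ℤ) ≠ 0 := by exact_mod_cast left_ne_zero_of_mul hQc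
    simp_rw [Nat.mul_div_cancel_left c (Nat.pos_of_ne_zero (left_ne_zero_of_mul hQc)),
      Nat.cast_mul, ← mul_add, mul_dvd_mul_iff_left hb, mul_ite, mul_zero]
    rw [sum_coprime_ite_dvd_add hcop, Kl_eq_of_modEq n q d (minv_val_neg_modEq habar), mul_comm]
  · refine sum_eq_zero fun y hy => ?_
    rw [if_neg fun h => hbQ (eq_of_mul_dvd_mul_add hcop hbQc (mem_filter.mp hy).2 h), mul_zero]

/-- **Collapsing a divisor sum of hyper-Kloosterman sums (one step).**
Let `L ≥ 0`, let `c, Q, b` be positive integers, `a, n` integers with `gcd(a,c) = 1` and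
`ā` a multiplicative inverse of `a` mod `c`.  Let `q⃗, d⃗` be `L`-tuples of positive
integers with `b ∣ Qc` and `d₁ ∣ q₁·(Qc/b)`, `d₂ ∣ q₁q₂·(Qc/b)/d₁`, ….  Then
`∑_{D ∣ Qc} ∑*_{x mod Qc/D} e(Dxā/c) · Kl_{L+1}(x, n, Qc/D; (D,q₁,…,q_L),(b,d₁,…,d_L))`
equals `Qc · Kl_L(-a, n, c; q⃗, d⃗)` if `b = Q`, and `0` otherwise. -/
theorem hyperKloosterman_divisor_sum_collapse
    (L : ℕ) (c Q b : ℕ) (hc : 0 < c) (hQ : 0 < Q) (hb : 0 < b)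
    (a n : ℤ) (ha : Int.gcd a (c : ℤ) = 1)
    (abar : ℤ) (habar : a * abar ≡ 1 [ZMOD (c : ℤ)])
    (q d : Fin L → ℕ) (hq : ∀ i, 0 < q i) (hd : ∀ i, 0 < d i)
    (hbQc : b ∣ Q * c)
    (hdiv : ∀ i : Fin L,
      (∏ j ∈ Finset.Iic i, d j) ∣ (∏ j ∈ Finset.Iic i, q j) * (Q * c / b)) :
    (∑ D ∈ (Q * c).divisors,
        ∑ x ∈ (Finset.range (Q * c / D)).filter (fun t => Nat.Coprime t (Q * c / D)),
          e (((D : ℚ) * (x : ℚ) * (abar : ℚ)) / (c : ℚ)) *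
            Kl ((x : ℕ) : ℤ) n (Q * c / D) (Fin.cons D q) (Fin.cons b d)) =
      if b = Q then ((Q * c : ℕ) : ℂ) * Kl (-a) n c q d else 0 :=
  hyperKloosterman_divisor_sum_collapse_general L c Q b a n abar habar q d hbQc
end
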